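/- Define c : ℕ × ℕ → ℚ by: c(a,0) = #{(m,n) ∈ ℕ² : 2m+3n = a}; for b ≥ 1, c(a,b) = (2ab - b - 3b² + 2)/2 if a ≥ 3b, and c(a,b) = c(a,b-1) if a < 3b. Then in ℚ[[s,t]] one has (∑_{a,b≥0} c(a,b) s^b t^a)·(1-t²)(1-t³)(1-s)(1-st³) = 1 + 2st⁴ + 2st⁵ + s²t⁹. -/

import Mathlib

/-- `dimc a b` encodes `dim H⁰(Y, O(aF + bS))`:
for `b = 0` it counts representations `a = 2m + 3n`; for `b ≥ 1` it is the
Riemann–Roch value `(2ab - b - 3b² + 2)/2` when `a ≥ 3b`, and `dimc a (b-1)` when `a < 3b`. -/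
noncomputable def dimc : ℕ → ℕ → ℚ
  | a, 0 => (Nat.card {p : ℕ × ℕ // 2 * p.1 + 3 * p.2 = a} : ℚ)
  | a, b + 1 =>
      if 3 * (b + 1) ≤ a then
        (2 * (a : ℚ) * (b + 1) - (b + 1) - 3 * ((b : ℚ) + 1) ^ 2 + 2) / 2
      else dimc a b

/-- The double generating series `∑_{a,b} dimc a b · s^b t^a`,
where `s = X 0` and `t = X 1`. -/
noncomputable def dimSeries : MvPowerSeries (Fin 2) ℚ := fun e => dimc (e 1) (e 0)

/-!
Multiplying by `1 - s` replaces `dimc a b` by its jump `dimc a b - dimc a (b - 1)`. Since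
`dimc a b` is a quadratic polynomial in `b` on `a ≥ 3b` and constant in `b` below that line, the
jump is `a - 3b + 1` for `a ≥ 3b`, `b ≥ 2`, and `0` otherwise, a function invariant under
`(a, b) ↦ (a + 3, b + 1)`. Multiplying further by `1 - s t³` therefore kills every row `b ≥ 3`,
and the three surviving rows are explicit in `N a = #{(m, n) | 2m + 3n = a}`, with
`N a = ⌊(a + 2)/2⌋ - ⌊(a + 2)/3⌋`. Applying `(1 - t²)(1 - t³)` to these rows is a periodic check
modulo `6`.
-/

open MvPowerSeries

def twoThreeCount (a : ℕ) : ℕ := (a + 2) / 2 - (a + 2) / 3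

-- A solution is determined by `n`, which runs over `n ≡ a [MOD 2]`, `3n ≤ a`; index it by `n / 2`.
def twoThreeRepsEquiv (a : ℕ) :
    {p : ℕ × ℕ // 2 * p.1 + 3 * p.2 = a} ≃ Fin (twoThreeCount a) where
  toFun p := ⟨p.1.2 / 2, by have := p.2; unfold twoThreeCount; omega⟩
  invFun k := ⟨((a - 3 * (a % 2 + 2 * k)) / 2, a % 2 + 2 * k), by
    have := k.2; unfold twoThreeCount at this; omega⟩
  left_inv := by
    rintro ⟨⟨m, n⟩, h⟩
    ext <;> dsimp only <;> omega
  right_inv k := by ext; dsimp only; omega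

theorem dimc_zero (a : ℕ) : dimc a 0 = twoThreeCount a := by
  rw [dimc, Nat.card_congr (twoThreeRepsEquiv a), Nat.card_eq_fintype_card, Fintype.card_fin]

theorem dimc_succ_of_le {a b : ℕ} (h : 3 * (b + 1) ≤ a) :
    dimc a (b + 1) = (2 * (a : ℚ) * (b + 1) - (b + 1) - 3 * ((b : ℚ) + 1) ^ 2 + 2) / 2 :=
  if_pos h

theorem dimc_succ_of_lt {a b : ℕ} (h : a < 3 * (b + 1)) : dimc a (b + 1) = dimc a b :=
  if_neg (by omega)

section Series₂

variable {R : Type*} [CommRing R]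

def series₂ (f : ℕ → ℕ → R) : MvPowerSeries (Fin 2) R := fun e => f (e 1) (e 0)

theorem coeff_series₂ (f : ℕ → ℕ → R) (e : Fin 2 →₀ ℕ) :
    coeff e (series₂ f) = f (e 1) (e 0) :=
  rfl

theorem series₂_mul_one_sub (f : ℕ → ℕ → R) (i j : ℕ) :
    series₂ f * (1 - X 0 ^ i * X 1 ^ j) =
      series₂ fun a b => f a b - if j ≤ a ∧ i ≤ b then f (a - j) (b - i) else 0 := by
  ext e
  rw [mul_sub, mul_one, map_sub, X_pow_eq, X_pow_eq, monomial_mul_monomial, one_mul,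
    coeff_mul_monomial, mul_one]
  simp [coeff_series₂, Finsupp.le_def, Fin.forall_fin_two, and_comm]

theorem coeff_X_pow_mul_X_pow (e : Fin 2 →₀ ℕ) (i j : ℕ) :
    coeff e (X 0 ^ i * X 1 ^ j : MvPowerSeries (Fin 2) R) =
      if e 0 = i ∧ e 1 = j then 1 else 0 := by
  rw [X_pow_eq, X_pow_eq, monomial_mul_monomial, one_mul, coeff_monomial]
  simp [Finsupp.ext_iff, Fin.forall_fin_two]

end Series₂

def diffS : ℕ → ℕ → ℤ
  | a, 0 => twoThreeCount a
  | a, 1 => if 3 ≤ a then a - 1 - twoThreeCount a else 0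
  | a, b + 2 => if 3 * (b + 2) ≤ a then a - 3 * (b + 2) + 1 else 0

theorem cast_diffS (a b : ℕ) :
    (diffS a b : ℚ) = dimc a b - if 1 ≤ b then dimc a (b - 1) else 0 := by
  match b with
  | 0 => simp [dimc_zero, diffS]
  | 1 =>
    rcases le_or_gt 3 a with h | h
    · simp [dimc_succ_of_le (b := 0) h, dimc_zero, diffS, h]; ring
    · simp [dimc_succ_of_lt (b := 0) h, diffS, h.not_ge]
  | b + 2 =>
    rw [if_pos (by omega), show b + 2 - 1 = b + 1 from rfl]
    rcases le_or_gt (3 * (b + 2)) a with h | h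
    · rw [dimc_succ_of_le (b := b + 1) h, dimc_succ_of_le (b := b) (by omega)]
      simp only [diffS, if_pos h]
      push_cast
      ring
    · simp [dimc_succ_of_lt (b := b + 1) h, diffS, h.not_ge]

def diffST3 : ℕ → ℕ → ℤ
  | a, 0 => twoThreeCount a
  | a, 1 => if 3 ≤ a then a - 1 - twoThreeCount a - twoThreeCount (a - 3) else 0
  | a, 2 => if 6 ≤ a then twoThreeCount (a - 3) - 1 else 0
  | _, _ + 3 => 0

theorem diffST3_eq_sub (a b : ℕ) :
    diffST3 a b = diffS a b - if 3 ≤ a ∧ 1 ≤ b then diffS (a - 3) (b - 1) else 0 := by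
  match b with
  | 0 => simp [diffS, diffST3]
  | 1 => simp only [Nat.sub_self, diffS, diffST3]; split_ifs <;> omega
  | 2 => rw [show 2 - 1 = 1 from rfl]; simp only [diffS, diffST3]; split_ifs <;> omega
  | b + 3 =>
    rw [show b + 3 - 1 = b + 2 from rfl]
    simp only [diffS, diffST3]
    split_ifs <;> omega

def numeratorCoeff : ℕ → ℕ → ℤ
  | a, 0 => if a = 0 then 1 else 0
  | a, 1 => if a = 4 ∨ a = 5 then 2 else 0
  | a, 2 => if a = 9 then 1 else 0
  | _, _ + 3 => 0

theorem diffST3_row_zero (a : ℕ) :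
    diffST3 a 0 - (if 2 ≤ a then diffST3 (a - 2) 0 else 0)
      - (if 3 ≤ a then diffST3 (a - 3) 0 - (if 5 ≤ a then diffST3 (a - 5) 0 else 0) else 0)
      = numeratorCoeff a 0 := by
  simp only [diffST3, numeratorCoeff, twoThreeCount]
  split_ifs <;> omega

theorem diffST3_row_one (a : ℕ) :
    diffST3 a 1 - (if 2 ≤ a then diffST3 (a - 2) 1 else 0)
      - (if 3 ≤ a then diffST3 (a - 3) 1 - (if 5 ≤ a then diffST3 (a - 5) 1 else 0) else 0)
      = numeratorCoeff a 1 := by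
  simp only [diffST3, numeratorCoeff, twoThreeCount]
  split_ifs <;> omega

theorem diffST3_row_two (a : ℕ) :
    diffST3 a 2 - (if 2 ≤ a then diffST3 (a - 2) 2 else 0)
      - (if 3 ≤ a then diffST3 (a - 3) 2 - (if 5 ≤ a then diffST3 (a - 5) 2 else 0) else 0)
      = numeratorCoeff a 2 := by
  simp only [diffST3, numeratorCoeff, twoThreeCount]
  split_ifs <;> omega

theorem diffST3_sub_shifts (a b : ℕ) :
    diffST3 a b - (if 2 ≤ a then diffST3 (a - 2) b else 0)
      - (if 3 ≤ a then diffST3 (a - 3) b - (if 5 ≤ a then diffST3 (a - 5) b else 0) else 0)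
      = numeratorCoeff a b := by
  match b with
  | 0 => exact diffST3_row_zero a
  | 1 => exact diffST3_row_one a
  | 2 => exact diffST3_row_two a
  | _ + 3 => simp [diffST3, numeratorCoeff]

theorem dimSeries_mul_one_sub_X :
    dimSeries * (1 - X 0) = series₂ fun a b => (diffS a b : ℚ) := by
  rw [show (X 0 : MvPowerSeries (Fin 2) ℚ) = X 0 ^ 1 * X 1 ^ 0 by ring]
  refine (series₂_mul_one_sub dimc 1 0).trans (congrArg series₂ ?_)
  ext a b
  simp [cast_diffS]

theorem series₂_diffS_mul :
    (series₂ fun a b => (diffS a b : ℚ)) * (1 - X 0 * X 1 ^ 3)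
      = series₂ fun a b => (diffST3 a b : ℚ) := by
  rw [show (X 0 : MvPowerSeries (Fin 2) ℚ) = X 0 ^ 1 by ring, series₂_mul_one_sub]
  congr 1
  ext a b
  simp [diffST3_eq_sub, and_comm]

theorem series₂_diffST3_mul :
    (series₂ fun a b => (diffST3 a b : ℚ)) * (1 - X 1 ^ 2) * (1 - X 1 ^ 3)
      = series₂ fun a b => (numeratorCoeff a b : ℚ) := by
  have hX (j : ℕ) : (X 1 : MvPowerSeries (Fin 2) ℚ) ^ j = X 0 ^ 0 * X 1 ^ j := by simp
  rw [hX 2, hX 3, series₂_mul_one_sub, series₂_mul_one_sub]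
  congr 1
  ext a b
  simp only [Nat.zero_le, and_true, Nat.sub_zero, Nat.sub_sub,
    show 2 ≤ a - 3 ↔ 5 ≤ a by omega]
  exact_mod_cast diffST3_sub_shifts a b

theorem series₂_numeratorCoeff :
    (series₂ fun a b => (numeratorCoeff a b : ℚ))
      = 1 + 2 * X 0 * X 1 ^ 4 + 2 * X 0 * X 1 ^ 5 + X 0 ^ 2 * X 1 ^ 9 := by
  rw [show (1 + 2 * X 0 * X 1 ^ 4 + 2 * X 0 * X 1 ^ 5 + X 0 ^ 2 * X 1 ^ 9 :
      MvPowerSeries (Fin 2) ℚ) = X 0 ^ 0 * X 1 ^ 0 + C 2 * (X 0 ^ 1 * X 1 ^ 4)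
        + C 2 * (X 0 ^ 1 * X 1 ^ 5) + X 0 ^ 2 * X 1 ^ 9 by simp only [map_ofNat]; ring]
  ext e
  simp only [coeff_series₂, map_add, coeff_C_mul, coeff_X_pow_mul_X_pow]
  match e 0 with
  | 0 => simp [numeratorCoeff]
  | 1 => by_cases h : e 1 = 4 <;> simp [numeratorCoeff, h]
  | 2 => simp [numeratorCoeff]
  | _ + 3 => simp [numeratorCoeff]

open MvPowerSeries in
theorem stmt_3 :
    dimSeries * (1 - (X 1 : MvPowerSeries (Fin 2) ℚ) ^ 2) * (1 - X 1 ^ 3)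
        * (1 - X 0) * (1 - X 0 * X 1 ^ 3)
      = 1 + 2 * X 0 * X 1 ^ 4 + 2 * X 0 * X 1 ^ 5 + X 0 ^ 2 * X 1 ^ 9 := by
  calc _ = dimSeries * (1 - X 0) * (1 - X 0 * X 1 ^ 3) * (1 - X 1 ^ 2) * (1 - X 1 ^ 3) := by
        ring
    _ = _ := by
      rw [dimSeries_mul_one_sub_X, series₂_diffS_mul, series₂_diffST3_mul,
        series₂_numeratorCoeff]
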